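/- arXiv:2605.28092 — 2 statements merged into one kernel-verified Lean document; each statement's English description precedes it below -/
import Mathlib

section
/- Pointwise comparison of shifted operators: under the hypotheses of the CBF-STL operator definition (V(x,0)=h(x), V(x,·) antitone on (-∞,0], V(x,s) ≥ h(x) for s ≤ 0), for 0 ≤ α₁ ≤ α₂, β₁ ≥ α₁, β₂ ≥ α₂, and all t ∈ [0, min(α₂, β₁)] and x ∈ X, one has (T_{α₂,β₂} V)(x,t) ≥ (T_{α₁,β₁} V)(x,t). -/
/-- The CBF-STL operator `T_{α,β}` acting on a value function `V` with
terminal data `h`. -/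
noncomputable def cbfSTL {X : Type*} (h : X → ℝ) (V : X → ℝ → ℝ)
    (α β : ℝ) (x : X) (t : ℝ) : ℝ :=
  if t ≤ α then V x (t - α) else h x

/-- Pointwise comparison of shifted operators: the operator with the later
start time dominates on the common interval `[0, min(α₂, β₁)]`. -/
theorem cbfSTL_pointwise_mono {X : Type*} (h : X → ℝ) (V : X → ℝ → ℝ)
    (hV0 : ∀ x, V x 0 = h x)
    (hanti : ∀ x s₁ s₂, s₁ ≤ s₂ → s₂ ≤ 0 → V x s₂ ≤ V x s₁)
    (hVh : ∀ x s, s ≤ 0 → h x ≤ V x s)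
    (α₁ α₂ β₁ β₂ : ℝ) (hα₁ : 0 ≤ α₁) (hα : α₁ ≤ α₂)
    (hβ₁ : α₁ ≤ β₁) (hβ₂ : α₂ ≤ β₂)
    (x : X) (t : ℝ) (ht : t ∈ Set.Icc 0 (min α₂ β₁)) :
    cbfSTL h V α₁ β₁ x t ≤ cbfSTL h V α₂ β₂ x t := by
  obtain ⟨ht0, htm⟩ := ht
  have ht2 : t ≤ α₂ := le_trans htm (min_le_left _ _)
  unfold cbfSTL
  rw [if_pos ht2]
  by_cases h1 : t ≤ α₁
  · rw [if_pos h1]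
    exact hanti x (t - α₂) (t - α₁) (by linarith) (by linarith)
  · rw [if_neg h1]
    exact hVh x (t - α₂) (by linarith)
end

section
/- Sufficiency of enforcing only the earliest operator in a chain: let T_{α₁,β₁}, …, T_{α_I,β_I} be CBF-STL operators (acting on the same V with V(x,0)=h(x), V(x,·) antitone on (-∞,0], V(x,s) ≥ h(x) for s ≤ 0) with strictly increasing parameters α₁ < α₂ < ⋯ < α_I and β₁ < ⋯ < β_I, α_i ≤ β_i. Then for any x and any t ∈ [0, min(α₂, β₁)], (T_{α₁,β₁} V)(x,t) ≥ 0 implies (T_{α_i,β_i} V)(x,t) ≥ 0 for every i ∈ {1,…,I}. -/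
theorem cbfSTL_nonneg_of_le {X : Type*} {h : X → ℝ} {V : X → ℝ → ℝ} {x : X}
    (hanti : AntitoneOn (V x) (Set.Iic 0)) (hVh : ∀ s ≤ 0, h x ≤ V x s)
    {α α' : ℝ} (β β' : ℝ) {t : ℝ} (hα : α ≤ α') (ht : t ≤ α')
    (hT : 0 ≤ cbfSTL h V α β x t) : 0 ≤ cbfSTL h V α' β' x t := by
  have hs' : t - α' ≤ 0 := by linarith
  rw [cbfSTL, if_pos ht]
  unfold cbfSTL at hT
  split_ifs at hT with htα
  · have hs : t - α ≤ 0 := by linarith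
    exact hT.trans (hanti hs' hs (by linarith))
  · exact hT.trans (hVh _ hs')

theorem earliest_operator_suffices_general {X : Type*} (h : X → ℝ) (V : X → ℝ → ℝ)
    (hanti : ∀ y s₁ s₂, s₁ ≤ s₂ → s₂ ≤ 0 → V y s₂ ≤ V y s₁)
    (hVh : ∀ y s, s ≤ 0 → h y ≤ V y s)
    (I : ℕ) (α β : Fin (I + 2) → ℝ)
    (hαmono : StrictMono α)
    (x : X) (t : ℝ) (ht : t ∈ Set.Icc 0 (min (α 1) (β 0))) :
    0 ≤ cbfSTL h V (α 0) (β 0) x t →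
    ∀ i, 0 ≤ cbfSTL h V (α i) (β i) x t := by
  intro h0 i
  rcases eq_or_ne i 0 with rfl | hi
  · exact h0
  have hα1i : α 1 ≤ α i := hαmono.monotone (Fin.one_le_of_ne_zero hi)
  have htα1 : t ≤ α 1 := ht.2.trans (min_le_left _ _)
  exact cbfSTL_nonneg_of_le (fun _ _ s₂ hs₂ hle => hanti x _ s₂ hle hs₂) (hVh x) (β 0) (β i)
    (hαmono.monotone (Fin.zero_le i)) (htα1.trans hα1i) h0

/-- Sufficiency of enforcing only the earliest operator in a chain: for a
chain of CBF-STL operators with strictly increasing parameters, nonnegativity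
of the first one on `[0, min(α₂, β₁)]` implies nonnegativity of all of them
there. -/
theorem earliest_operator_suffices {X : Type*} (h : X → ℝ) (V : X → ℝ → ℝ)
    (hV0 : ∀ y, V y 0 = h y)
    (hanti : ∀ y s₁ s₂, s₁ ≤ s₂ → s₂ ≤ 0 → V y s₂ ≤ V y s₁)
    (hVh : ∀ y s, s ≤ 0 → h y ≤ V y s)
    (I : ℕ) (α β : Fin (I + 2) → ℝ)
    (hα0 : 0 ≤ α 0) (hαmono : StrictMono α) (hβmono : StrictMono β)
    (hαβ : ∀ i, α i ≤ β i)
    (x : X) (t : ℝ) (ht : t ∈ Set.Icc 0 (min (α 1) (β 0))) :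
    0 ≤ cbfSTL h V (α 0) (β 0) x t →
    ∀ i, 0 ≤ cbfSTL h V (α i) (β i) x t :=
  earliest_operator_suffices_general h V hanti hVh I α β hαmono x t ht
end
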